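/- For every alphabet Σ, there exists a reversible basic 1-pebble transducer with 6 states computing the squaring function on Σ*. -/
import Mathlib


/-!
Common framework: pebble transducers with equality tests
(following "Reversible Pebble Transducers").
-/

namespace RevPeb

/-- Atomic tests: `headPeb i` is `(h = p_i)`, `pebPeb i j` is `(p_i = p_j)`
(indices are 0-based, pebble `i+1` of the paper). -/
inductive Atom (k : ℕ) : Type where
  | headPeb : Fin k → Atom k
  | pebPeb : Fin k → Fin k → Atom k

/-- Pebble operations (0-based: `drop i`/`lift i` refer to pebble `i+1` of the paper). -/
inductive PebOp (k : ℕ) : Type where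
  | nop : PebOp k
  | drop : Fin k → PebOp k
  | lift : Fin k → PebOp k

/-- A test is a conjunction of literals: an atom together with a polarity. -/
abbrev Test (k : ℕ) : Type := List (Atom k × Bool)

/-- A transition `(q, a, φ, op, q')`; `letter = none` encodes the endmarker `#`. -/
structure PTrans (Q Sg : Type*) (k : ℕ) where
  src : Q
  letter : Option Sg
  test : Test k
  op : PebOp k
  tgt : Q

/-- A `k`-pebble transducer with equality tests (data part).
`dir q` is the polarity of state `q` (which part of `Q_{+1} ⊎ Q_0 ⊎ Q_{-1}` it lies in). -/
structure PT (Q Sg Gm : Type*) (k : ℕ) where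
  dir : Q → SignType
  qinit : Q
  qfin : Q
  δ : Set (PTrans Q Sg k)
  μ : PTrans Q Sg k → List Gm

variable {Q Sg Gm : Type*} {k : ℕ}

/-- Well-formedness: `q_i, q_f ∈ Q_0`, `q_i ≠ q_f`, no transition leaves `q_f`
nor enters `q_i`, and the transition set is finite. -/
def PT.WF (T : PT Q Sg Gm k) : Prop :=
  T.dir T.qinit = 0 ∧ T.dir T.qfin = 0 ∧ T.qinit ≠ T.qfin ∧
  (∀ t ∈ T.δ, t.src ≠ T.qfin ∧ t.tgt ≠ T.qinit) ∧ T.δ.Finite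

/-- Letter of the circular word `#u` at position `h ∈ {0,…,|u|}`;
`none` is the endmarker `#` (at position 0). -/
def letterAt (u : List Sg) (h : ℕ) : Option Sg :=
  if h = 0 then none else u[h-1]?

/-- Satisfaction of an atomic test by a pebble stack and head position. -/
def atomSat (peb : List ℕ) (h : ℕ) : Atom k → Prop
  | .headPeb i => (i : ℕ) < peb.length ∧ peb.getD i 0 = h
  | .pebPeb i j => (i : ℕ) < peb.length ∧ (j : ℕ) < peb.length ∧ peb.getD i 0 = peb.getD j 0

/-- Satisfaction of a test (conjunction of literals). -/
def testSat (peb : List ℕ) (h : ℕ) (φ : Test k) : Prop :=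
  ∀ l ∈ φ, (atomSat peb h l.1 ↔ l.2 = true)

/-- Executability of a pebble operation: `drop i` (pebble `i+1` of the paper) needs
`|peb| = i`, `lift i` needs `|peb| = i+1` and the top pebble at the head. -/
def opEnabled (peb : List ℕ) (h : ℕ) : PebOp k → Prop
  | .nop => True
  | .drop n => peb.length = (n : ℕ)
  | .lift n => peb.length = (n : ℕ) + 1 ∧ peb.getD (n : ℕ) 0 = h

/-- Effect of a pebble operation on the pebble stack. -/
def opApply (peb : List ℕ) (h : ℕ) : PebOp k → List ℕ
  | .nop => peb
  | .drop _ => peb ++ [h]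
  | .lift _ => peb.dropLast

/-- Head movement on the circular word `#u` (`len = |u|`, positions mod `len+1`). -/
def nextHead (len h : ℕ) : SignType → ℕ
  | .pos => (h + 1) % (len + 1)
  | .zero => h
  | .neg => (h + len) % (len + 1)

/-- A configuration `(q, peb, h)`. -/
structure Config (Q : Type*) where
  q : Q
  peb : List ℕ
  h : ℕ

/-- One step of the transducer on input `u` using transition `t`. -/
def PT.StepT (T : PT Q Sg Gm k) (u : List Sg) (t : PTrans Q Sg k) (C C' : Config Q) : Prop :=
  t ∈ T.δ ∧ C.q = t.src ∧ C.h ≤ u.length ∧ C.peb.length ≤ k ∧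
  letterAt u C.h = t.letter ∧
  testSat C.peb C.h t.test ∧ opEnabled C.peb C.h t.op ∧
  C'.q = t.tgt ∧ C'.peb = opApply C.peb C.h t.op ∧
  C'.h = nextHead u.length C.h (T.dir t.tgt)

/-- Runs, accumulating the produced output word. -/
inductive PT.Run (T : PT Q Sg Gm k) (u : List Sg) :
    Config Q → Config Q → List Gm → Prop where
  | refl (C : Config Q) : PT.Run T u C C []
  | step {C C' C'' : Config Q} (t : PTrans Q Sg k) {v : List Gm} :
      T.StepT u t C C' → PT.Run T u C' C'' v → PT.Run T u C C'' (T.μ t ++ v)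

/-- Semantics: pairs `(u,v)` such that some accepting run on `#u` outputs `v`. -/
def PT.Sem (T : PT Q Sg Gm k) : Set (List Sg × List Gm) :=
  {p | T.Run p.1 ⟨T.qinit, [], 0⟩ ⟨T.qfin, [], 0⟩ p.2}

/-- `t` is enabled at configuration `C` (on input `u`). -/
def PT.Enabled (T : PT Q Sg Gm k) (u : List Sg) (t : PTrans Q Sg k) (C : Config Q) : Prop :=
  ∃ C', T.StepT u t C C'

/-- `t` is reverse-enabled at configuration `C'` (on input `u`). -/
def PT.RevEnabled (T : PT Q Sg Gm k) (u : List Sg) (t : PTrans Q Sg k) (C' : Config Q) : Prop :=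
  ∃ C, T.StepT u t C C'

/-- Determinism: two transitions simultaneously enabled at a common configuration coincide. -/
def PT.Deterministic (T : PT Q Sg Gm k) : Prop :=
  ∀ (u : List Sg) (t₁ t₂ : PTrans Q Sg k) (C : Config Q),
    T.Enabled u t₁ C → T.Enabled u t₂ C → t₁ = t₂

/-- Reverse-determinism. -/
def PT.RevDeterministic (T : PT Q Sg Gm k) : Prop :=
  ∀ (u : List Sg) (t₁ t₂ : PTrans Q Sg k) (C' : Config Q),
    T.RevEnabled u t₁ C' → T.RevEnabled u t₂ C' → t₁ = t₂

/-- Reversible = deterministic and reverse-deterministic. -/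
def PT.Reversible (T : PT Q Sg Gm k) : Prop := T.Deterministic ∧ T.RevDeterministic

/-- A basic pebble transducer uses no pebble-pebble equality atoms. -/
def PT.Basic (T : PT Q Sg Gm k) : Prop :=
  ∀ t ∈ T.δ, ∀ l ∈ t.test, ∀ i j : Fin k, l.1 ≠ Atom.pebPeb i j

/-- `T` computes the partial function `f` (encoded with `Option`): `⟦T⟧` is the graph of `f`. -/
def PT.Computes (T : PT Q Sg Gm k) (f : List Sg → Option (List Gm)) : Prop :=
  ∀ u v, (u, v) ∈ T.Sem ↔ f u = some v

end RevPeb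

namespace RevPeb

/-- The squaring function: `w = a₁⋯aₙ ↦ w⁽¹⁾w⁽²⁾⋯w⁽ⁿ⁾` where `w⁽ⁱ⁾` is `w` with its
`i`-th letter marked (`Sum.inr` = marked copy, `Sum.inl` = plain copy). -/
def squaringFun {Sg : Type*} (w : List Sg) : List (Sg ⊕ Sg) :=
  (List.range w.length).flatMap
    (fun i => w.mapIdx (fun j a => if i = j then Sum.inr a else Sum.inl a))

/-! ### Auxiliary development for Statement 11 -/

section Squaring

variable {Sg : Type}

/-- The ten kinds of transitions of the squaring machine. -/
def trQI : PTrans (Fin 6) Sg 1 := ⟨0, none, [], .nop, 3⟩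
def trAy (a : Sg) : PTrans (Fin 6) Sg 1 := ⟨1, some a, [(.headPeb 0, true)], .nop, 1⟩
def trAn (a : Sg) : PTrans (Fin 6) Sg 1 := ⟨1, some a, [(.headPeb 0, false)], .nop, 1⟩
def trAH : PTrans (Fin 6) Sg 1 := ⟨1, none, [], .nop, 2⟩
def trBn (a : Sg) : PTrans (Fin 6) Sg 1 := ⟨2, some a, [(.headPeb 0, false)], .nop, 2⟩
def trBy (a : Sg) : PTrans (Fin 6) Sg 1 := ⟨2, some a, [(.headPeb 0, true)], .lift 0, 3⟩
def trC (a : Sg) : PTrans (Fin 6) Sg 1 := ⟨3, some a, [], .drop 0, 4⟩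
def trCH : PTrans (Fin 6) Sg 1 := ⟨3, none, [], .nop, 5⟩
def trD (a : Sg) : PTrans (Fin 6) Sg 1 := ⟨4, some a, [(.headPeb 0, false)], .nop, 4⟩
def trDH : PTrans (Fin 6) Sg 1 := ⟨4, none, [], .nop, 1⟩

/-- The squaring transducer. -/
def sqT (Sg : Type) : PT (Fin 6) Sg (Sg ⊕ Sg) 1 where
  dir := ![.zero, .pos, .neg, .pos, .neg, .zero]
  qinit := 0
  qfin := 5
  δ := {trQI, trAH, trCH, trDH} ∪ Set.range trAy ∪ Set.range trAn
      ∪ Set.range trBn ∪ Set.range trBy ∪ Set.range trC ∪ Set.range trD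
  μ := fun t => match t.src, t.letter, t.test with
    | 1, some a, [(_, true)] => [Sum.inr a]
    | 1, some a, [(_, false)] => [Sum.inl a]
    | _, _, _ => []

lemma mem_sqT_delta {t : PTrans (Fin 6) Sg 1} :
    t ∈ (sqT Sg).δ ↔ t = trQI ∨ t = trAH ∨ t = trCH ∨ t = trDH ∨
      (∃ a, trAy a = t) ∨ (∃ a, trAn a = t) ∨ (∃ a, trBn a = t) ∨
      (∃ a, trBy a = t) ∨ (∃ a, trC a = t) ∨ (∃ a, trD a = t) := by
  simp only [sqT, Set.mem_union, Set.mem_insert_iff, Set.mem_singleton_iff, Set.mem_range]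
  tauto

/-! #### Generic facts -/

lemma letterAt_zero (u : List Sg) : letterAt u 0 = none := rfl

lemma letterAt_pos (u : List Sg) {h : ℕ} (h1 : 1 ≤ h) (h2 : h ≤ u.length) :
    letterAt u h = some (u[h-1]'(by omega)) := by
  unfold letterAt
  rw [if_neg (by omega), List.getElem?_eq_getElem (by omega : h - 1 < u.length)]

lemma letterAt_eq_none {u : List Sg} {h : ℕ} (h2 : h ≤ u.length)
    (hn : letterAt u h = none) : h = 0 := by
  by_contra hne
  rw [letterAt_pos u (by omega) h2] at hn
  simp at hn

lemma nextHead_pos_eq {n h : ℕ} (h2 : h ≤ n) :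
    nextHead n h .pos = if h = n then 0 else h + 1 := by
  show (h + 1) % (n + 1) = _
  split_ifs with he
  · subst he; simp
  · exact Nat.mod_eq_of_lt (by omega)

lemma nextHead_neg_eq {n h : ℕ} (h2 : h ≤ n) :
    nextHead n h .neg = if h = 0 then n else h - 1 := by
  show (h + n) % (n + 1) = _
  split_ifs with he
  · subst he; simp [Nat.mod_eq_of_lt (by omega : n < n + 1)]
  · have : h + n = (n + 1) + (h - 1) := by omega
    rw [this, Nat.add_mod_left, Nat.mod_eq_of_lt (by omega)]

lemma nextHead_inj {n h h' : ℕ} (hh : h ≤ n) (hh' : h' ≤ n) (d : SignType)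
    (he : nextHead n h d = nextHead n h' d) : h = h' := by
  cases d
  · exact he
  · rw [nextHead_neg_eq hh, nextHead_neg_eq hh'] at he
    split_ifs at he <;> omega
  · rw [nextHead_pos_eq hh, nextHead_pos_eq hh'] at he
    split_ifs at he <;> omega

lemma PT.Run.trans {Q Gm : Type} {T : PT Q Sg Gm 1} {u : List Sg} {C C' C'' : Config Q}
    {v w : List Gm} (r1 : T.Run u C C' v) (r2 : T.Run u C' C'' w) :
    T.Run u C C'' (v ++ w) := by
  induction r1 with
  | refl => simpa using r2
  | step t s _ ih => rw [List.append_assoc]; exact .step t s (ih r2)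

lemma PT.Run.single {Q Gm : Type} {T : PT Q Sg Gm 1} {u : List Sg} {C C' : Config Q}
    {t : PTrans Q Sg 1} (s : T.StepT u t C C') : T.Run u C C' (T.μ t) := by
  simpa using PT.Run.step t s (.refl C')

/-! #### Determinism -/

lemma testSat_contra {peb : List ℕ} {h : ℕ}
    (ht : testSat peb h [(Atom.headPeb (0:Fin 1), true)])
    (hf : testSat peb h [(Atom.headPeb (0:Fin 1), false)]) : False := by
  have h1 := ht (Atom.headPeb 0, true) (by simp)
  have h2 := hf (Atom.headPeb 0, false) (by simp)
  simp [atomSat] at h1 h2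
  exact h2 h1.1 h1.2

lemma sqT_det : (sqT Sg).Deterministic := by
  rintro u t1 t2 C ⟨C1, m1, hq1, hh1, hpl1, hl1, ht1, ho1, -, -, -⟩
    ⟨C2, m2, hq2, hh2, hpl2, hl2, ht2, ho2, -, -, -⟩
  rw [mem_sqT_delta] at m1 m2
  rcases m1 with rfl | rfl | rfl | rfl | ⟨a, rfl⟩ | ⟨a, rfl⟩ | ⟨a, rfl⟩ | ⟨a, rfl⟩ | ⟨a, rfl⟩ | ⟨a, rfl⟩ <;>
    rcases m2 with rfl | rfl | rfl | rfl | ⟨b, rfl⟩ | ⟨b, rfl⟩ | ⟨b, rfl⟩ | ⟨b, rfl⟩ | ⟨b, rfl⟩ | ⟨b, rfl⟩ <;>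
    simp_all [trQI, trAy, trAn, trAH, trBn, trBy, trC, trCH, trD, trDH] <;>
    first
      | exact testSat_contra ht1 ht2
      | exact testSat_contra ht2 ht1

lemma testSat_self_contra {h : ℕ}
    (hf : testSat [h] h [(Atom.headPeb (0:Fin 1), false)]) : False := by
  have := hf (Atom.headPeb 0, false) (by simp)
  simp [atomSat] at this

lemma sqT_revdet : (sqT Sg).RevDeterministic := by
  rintro u t1 t2 C' ⟨C1, m1, hq1, hh1, hpl1, hl1, ht1, ho1, hq1', hp1', hh1'⟩
    ⟨C2, m2, hq2, hh2, hpl2, hl2, ht2, ho2, hq2', hp2', hh2'⟩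
  have htgt : t1.tgt = t2.tgt := by rw [← hq1', hq2']
  have hd : (sqT Sg).dir t1.tgt = (sqT Sg).dir t2.tgt := by rw [htgt]
  have hhh : C1.h = C2.h := nextHead_inj hh1 hh2 _ (by rw [← hh1', hh2', hd])
  have hlet : t1.letter = t2.letter := by rw [← hl1, hhh, hl2]
  rw [mem_sqT_delta] at m1 m2
  rcases m1 with rfl | rfl | rfl | rfl | ⟨a, rfl⟩ | ⟨a, rfl⟩ | ⟨a, rfl⟩ | ⟨a, rfl⟩ | ⟨a, rfl⟩ | ⟨a, rfl⟩ <;>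
    rcases m2 with rfl | rfl | rfl | rfl | ⟨b, rfl⟩ | ⟨b, rfl⟩ | ⟨b, rfl⟩ | ⟨b, rfl⟩ | ⟨b, rfl⟩ | ⟨b, rfl⟩ <;>
    simp_all [trQI, trAy, trAn, trAH, trBn, trBy, trC, trCH, trD, trDH, opApply, opEnabled] <;>
    first
      | exact testSat_contra ht1 ht2
      | exact testSat_contra ht2 ht1
      | exact testSat_self_contra ht1
      | exact testSat_self_contra ht2
      | (rw [← hp1'] at ht1; exact testSat_self_contra ht1)

lemma sqT_wf [Fintype Sg] : (sqT Sg).WF := by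
  refine ⟨rfl, rfl, by simp [sqT], ?_, ?_⟩
  · intro t ht
    rw [mem_sqT_delta] at ht
    rcases ht with rfl | rfl | rfl | rfl | ⟨a, rfl⟩ | ⟨a, rfl⟩ | ⟨a, rfl⟩ | ⟨a, rfl⟩ | ⟨a, rfl⟩ | ⟨a, rfl⟩ <;>
      simp [sqT, trQI, trAy, trAn, trAH, trBn, trBy, trC, trCH, trD, trDH]
  · refine (((((((Set.toFinite _).union (Set.finite_range _)).union
      (Set.finite_range _)).union (Set.finite_range _)).union
      (Set.finite_range _)).union (Set.finite_range _)).union (Set.finite_range _))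

lemma sqT_basic : (sqT Sg).Basic := by
  intro t ht l hl i j
  rw [mem_sqT_delta] at ht
  rcases ht with rfl | rfl | rfl | rfl | ⟨a, rfl⟩ | ⟨a, rfl⟩ | ⟨a, rfl⟩ | ⟨a, rfl⟩ | ⟨a, rfl⟩ | ⟨a, rfl⟩ <;>
    simp_all [trQI, trAy, trAn, trAH, trBn, trBy, trC, trCH, trD, trDH]

/-! #### Membership and output lemmas -/

lemma mem_trQI : (trQI : PTrans (Fin 6) Sg 1) ∈ (sqT Sg).δ := by
  rw [mem_sqT_delta]; exact Or.inl rfl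
lemma mem_trAH : (trAH : PTrans (Fin 6) Sg 1) ∈ (sqT Sg).δ := by
  rw [mem_sqT_delta]; exact Or.inr (Or.inl rfl)
lemma mem_trCH : (trCH : PTrans (Fin 6) Sg 1) ∈ (sqT Sg).δ := by
  rw [mem_sqT_delta]; exact Or.inr (Or.inr (Or.inl rfl))
lemma mem_trDH : (trDH : PTrans (Fin 6) Sg 1) ∈ (sqT Sg).δ := by
  rw [mem_sqT_delta]; exact Or.inr (Or.inr (Or.inr (Or.inl rfl)))
lemma mem_trAy (a : Sg) : trAy a ∈ (sqT Sg).δ := by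
  rw [mem_sqT_delta]; exact Or.inr (Or.inr (Or.inr (Or.inr (Or.inl ⟨a, rfl⟩))))
lemma mem_trAn (a : Sg) : trAn a ∈ (sqT Sg).δ := by
  rw [mem_sqT_delta]; exact Or.inr (Or.inr (Or.inr (Or.inr (Or.inr (Or.inl ⟨a, rfl⟩)))))
lemma mem_trBn (a : Sg) : trBn a ∈ (sqT Sg).δ := by
  rw [mem_sqT_delta]
  exact Or.inr (Or.inr (Or.inr (Or.inr (Or.inr (Or.inr (Or.inl ⟨a, rfl⟩))))))
lemma mem_trBy (a : Sg) : trBy a ∈ (sqT Sg).δ := by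
  rw [mem_sqT_delta]
  exact Or.inr (Or.inr (Or.inr (Or.inr (Or.inr (Or.inr (Or.inr (Or.inl ⟨a, rfl⟩)))))))
lemma mem_trC (a : Sg) : trC a ∈ (sqT Sg).δ := by
  rw [mem_sqT_delta]
  exact Or.inr (Or.inr (Or.inr (Or.inr (Or.inr (Or.inr (Or.inr (Or.inr (Or.inl ⟨a, rfl⟩))))))))
lemma mem_trD (a : Sg) : trD a ∈ (sqT Sg).δ := by
  rw [mem_sqT_delta]
  exact Or.inr (Or.inr (Or.inr (Or.inr (Or.inr (Or.inr (Or.inr (Or.inr (Or.inr ⟨a, rfl⟩))))))))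

lemma mu_trAy (a : Sg) : (sqT Sg).μ (trAy a) = [Sum.inr a] := rfl
lemma mu_trAn (a : Sg) : (sqT Sg).μ (trAn a) = [Sum.inl a] := rfl
lemma mu_trQI : (sqT Sg).μ (trQI : PTrans (Fin 6) Sg 1) = [] := rfl
lemma mu_trAH : (sqT Sg).μ (trAH : PTrans (Fin 6) Sg 1) = [] := rfl
lemma mu_trCH : (sqT Sg).μ (trCH : PTrans (Fin 6) Sg 1) = [] := rfl
lemma mu_trDH : (sqT Sg).μ (trDH : PTrans (Fin 6) Sg 1) = [] := rfl
lemma mu_trBn (a : Sg) : (sqT Sg).μ (trBn a) = [] := rfl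
lemma mu_trBy (a : Sg) : (sqT Sg).μ (trBy a) = [] := rfl
lemma mu_trC (a : Sg) : (sqT Sg).μ (trC a) = [] := rfl
lemma mu_trD (a : Sg) : (sqT Sg).μ (trD a) = [] := rfl

/-! #### Step lemmas -/

lemma stepQI (u : List Sg) :
    (sqT Sg).StepT u trQI ⟨0, [], 0⟩ ⟨3, [], nextHead u.length 0 .pos⟩ :=
  ⟨mem_trQI, rfl, by simp, by simp, rfl, by intro l hl; simp [trQI] at hl, trivial,
    rfl, rfl, rfl⟩

lemma stepAy (u : List Sg) {h : ℕ} (h1 : 1 ≤ h) (h2 : h ≤ u.length) :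
    (sqT Sg).StepT u (trAy (u[h-1]'(by omega))) ⟨1, [h], h⟩
      ⟨1, [h], nextHead u.length h .pos⟩ := by
  refine ⟨mem_trAy _, rfl, h2, by simp, letterAt_pos u h1 h2, ?_, trivial, rfl, rfl, rfl⟩
  intro l hl
  simp only [trAy, List.mem_singleton] at hl
  subst hl
  simp [atomSat]

lemma stepAn (u : List Sg) {h p : ℕ} (h1 : 1 ≤ h) (h2 : h ≤ u.length) (hp : p ≠ h) :
    (sqT Sg).StepT u (trAn (u[h-1]'(by omega))) ⟨1, [p], h⟩
      ⟨1, [p], nextHead u.length h .pos⟩ := by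
  refine ⟨mem_trAn _, rfl, h2, by simp, letterAt_pos u h1 h2, ?_, trivial, rfl, rfl, rfl⟩
  intro l hl
  simp only [trAn, List.mem_singleton] at hl
  subst hl
  simp [atomSat, hp]

lemma stepAH (u : List Sg) (p : ℕ) :
    (sqT Sg).StepT u trAH ⟨1, [p], 0⟩ ⟨2, [p], nextHead u.length 0 .neg⟩ :=
  ⟨mem_trAH, rfl, by simp, by simp, rfl, by intro l hl; simp [trAH] at hl, trivial,
    rfl, rfl, rfl⟩

lemma stepBn (u : List Sg) {h p : ℕ} (h1 : 1 ≤ h) (h2 : h ≤ u.length) (hp : p ≠ h) :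
    (sqT Sg).StepT u (trBn (u[h-1]'(by omega))) ⟨2, [p], h⟩
      ⟨2, [p], nextHead u.length h .neg⟩ := by
  refine ⟨mem_trBn _, rfl, h2, by simp, letterAt_pos u h1 h2, ?_, trivial, rfl, rfl, rfl⟩
  intro l hl
  simp only [trBn, List.mem_singleton] at hl
  subst hl
  simp [atomSat, hp]

lemma stepBy (u : List Sg) {h : ℕ} (h1 : 1 ≤ h) (h2 : h ≤ u.length) :
    (sqT Sg).StepT u (trBy (u[h-1]'(by omega))) ⟨2, [h], h⟩
      ⟨3, [], nextHead u.length h .pos⟩ := by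
  refine ⟨mem_trBy _, rfl, h2, by simp, letterAt_pos u h1 h2, ?_, ⟨rfl, rfl⟩, rfl, rfl, rfl⟩
  intro l hl
  simp only [trBy, List.mem_singleton] at hl
  subst hl
  simp [atomSat]

lemma stepC (u : List Sg) {h : ℕ} (h1 : 1 ≤ h) (h2 : h ≤ u.length) :
    (sqT Sg).StepT u (trC (u[h-1]'(by omega))) ⟨3, [], h⟩
      ⟨4, [h], nextHead u.length h .neg⟩ := by
  refine ⟨mem_trC _, rfl, h2, by simp, letterAt_pos u h1 h2, ?_, rfl, rfl, rfl, rfl⟩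
  intro l hl
  simp [trC] at hl

lemma stepCH (u : List Sg) :
    (sqT Sg).StepT u trCH ⟨3, [], 0⟩ ⟨5, [], 0⟩ :=
  ⟨mem_trCH, rfl, by simp, by simp, rfl, by intro l hl; simp [trCH] at hl, trivial,
    rfl, rfl, rfl⟩

lemma stepD (u : List Sg) {h q : ℕ} (h1 : 1 ≤ h) (h2 : h ≤ u.length) (hq : q ≠ h) :
    (sqT Sg).StepT u (trD (u[h-1]'(by omega))) ⟨4, [q], h⟩
      ⟨4, [q], nextHead u.length h .neg⟩ := by
  refine ⟨mem_trD _, rfl, h2, by simp, letterAt_pos u h1 h2, ?_, trivial, rfl, rfl, rfl⟩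
  intro l hl
  simp only [trD, List.mem_singleton] at hl
  subst hl
  simp [atomSat, hq]

lemma stepDH (u : List Sg) (q : ℕ) :
    (sqT Sg).StepT u trDH ⟨4, [q], 0⟩ ⟨1, [q], nextHead u.length 0 .pos⟩ :=
  ⟨mem_trDH, rfl, by simp, by simp, rfl, by intro l hl; simp [trDH] at hl, trivial,
    rfl, rfl, rfl⟩

/-! #### Output segments -/

def mk (u : List Sg) (p j : ℕ) : List (Sg ⊕ Sg) :=
  (u[j-1]?.toList).map (fun a => if p = j then Sum.inr a else Sum.inl a)

def S (u : List Sg) (p h : ℕ) : List (Sg ⊕ Sg) :=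
  (List.range (u.length + 1 - h)).flatMap (fun i => mk u p (h + i))

lemma mk_pos (u : List Sg) (p : ℕ) {j : ℕ} (h1 : 1 ≤ j) (h2 : j ≤ u.length) :
    mk u p j = [if p = j then Sum.inr (u[j-1]'(by omega)) else Sum.inl (u[j-1]'(by omega))] := by
  simp only [mk, List.getElem?_eq_getElem (show j - 1 < u.length by omega), Option.toList_some,
    List.map_cons, List.map_nil]

lemma flatMap_range_eq_mapIdx {α β : Type*} :
    ∀ (u : List α) (f : ℕ → α → β),
    (List.range u.length).flatMap (fun j => (u[j]?.toList).map (f j)) = u.mapIdx f := by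
  intro u
  induction u with
  | nil => intro f; simp
  | cons a u ih =>
    intro f
    rw [List.length_cons, List.range_succ_eq_map, List.flatMap_cons, List.flatMap_map,
      List.mapIdx_cons, ← ih (fun i => f (i + 1))]
    simp [Function.comp_def]

lemma S_one (u : List Sg) (i : ℕ) :
    S u (i + 1) 1 = u.mapIdx (fun j a => if i = j then Sum.inr a else Sum.inl a) := by
  rw [← flatMap_range_eq_mapIdx]
  unfold S
  rw [show u.length + 1 - 1 = u.length by omega]
  congr 1
  funext j
  unfold mk
  rw [show 1 + j - 1 = j by omega]
  congr 1
  funext a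
  exact if_congr (by omega) rfl rfl

lemma S_succ (u : List Sg) (p : ℕ) {h : ℕ} (_h1 : 1 ≤ h) (h2 : h ≤ u.length) :
    S u p h = mk u p h ++ S u p (h + 1) := by
  unfold S
  rw [show u.length + 1 - h = (u.length + 1 - (h + 1)) + 1 by omega,
    List.range_succ_eq_map, List.flatMap_cons, List.flatMap_map]
  have hfun : (fun a : ℕ => mk u p (h + a.succ)) = fun i => mk u p (h + 1 + i) := by
    funext i
    show mk u p (h + (i + 1)) = mk u p (h + 1 + i)
    congr 1
    omega
  simp only [Function.comp_def, hfun, Nat.add_zero]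

lemma S_nil (u : List Sg) (p : ℕ) : S u p (u.length + 1) = [] := by
  unfold S; simp

/-! #### Run segments -/

lemma runA (u : List Sg) {p : ℕ} : ∀ d h, 1 ≤ h → u.length = h + d →
    (sqT Sg).Run u ⟨1, [p], h⟩ ⟨1, [p], 0⟩ (S u p h) := by
  intro d
  induction d with
  | zero =>
    intro h h1 hd
    have h2 : h ≤ u.length := by omega
    have hnil : S u p (h + 1) = [] := by rw [show h + 1 = u.length + 1 by omega]; exact S_nil u p
    by_cases hp : p = h
    · subst hp
      have st := stepAy u h1 h2
      rw [nextHead_pos_eq h2, if_pos (by omega)] at st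
      have r := PT.Run.single st
      rw [mu_trAy] at r
      rw [S_succ u p h1 h2, hnil, mk_pos u p h1 h2, if_pos rfl, List.append_nil]
      exact r
    · have st := stepAn u h1 h2 hp
      rw [nextHead_pos_eq h2, if_pos (by omega)] at st
      have r := PT.Run.single st
      rw [mu_trAn] at r
      rw [S_succ u p h1 h2, hnil, mk_pos u p h1 h2, if_neg hp, List.append_nil]
      exact r
  | succ d ih =>
    intro h h1 hd
    have h2 : h ≤ u.length := by omega
    have tail := ih (h + 1) (by omega) (by omega)
    by_cases hp : p = h
    · subst hp
      have st := stepAy u h1 h2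
      rw [nextHead_pos_eq h2, if_neg (by omega)] at st
      have r := PT.Run.step _ st tail
      rw [mu_trAy] at r
      rw [S_succ u p h1 h2, mk_pos u p h1 h2, if_pos rfl]
      exact r
    · have st := stepAn u h1 h2 hp
      rw [nextHead_pos_eq h2, if_neg (by omega)] at st
      have r := PT.Run.step _ st tail
      rw [mu_trAn] at r
      rw [S_succ u p h1 h2, mk_pos u p h1 h2, if_neg hp]
      exact r

lemma runB (u : List Sg) {p : ℕ} (hp1 : 1 ≤ p) : ∀ d h, h ≤ u.length → h = p + d →
    (sqT Sg).Run u ⟨2, [p], h⟩ ⟨3, [], nextHead u.length p .pos⟩ [] := by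
  intro d
  induction d with
  | zero =>
    intro h h2 hd
    obtain rfl : h = p := by omega
    have st := stepBy u (by omega) h2
    have r := PT.Run.single st
    rw [mu_trBy] at r
    exact r
  | succ d ih =>
    intro h h2 hd
    have st := stepBn u (show 1 ≤ h by omega) h2 (show p ≠ h by omega)
    rw [nextHead_neg_eq h2, if_neg (by omega)] at st
    have r := PT.Run.step _ st (ih (h - 1) (by omega) (by omega))
    rw [mu_trBn] at r
    exact r

lemma runD (u : List Sg) (q : ℕ) (hn : 1 ≤ u.length) : ∀ h, h ≤ u.length → h < q →
    (sqT Sg).Run u ⟨4, [q], h⟩ ⟨1, [q], 1⟩ [] := by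
  intro h
  induction h with
  | zero =>
    intro _ _
    have st := stepDH u q
    rw [nextHead_pos_eq (by omega), if_neg (by omega)] at st
    have r := PT.Run.single st
    rw [mu_trDH] at r
    exact r
  | succ h ih =>
    intro h2 hq
    have st := stepD u (by omega) h2 (by omega : q ≠ h + 1)
    rw [nextHead_neg_eq h2, if_neg (by omega)] at st
    simp only [Nat.add_sub_cancel] at st
    have r := PT.Run.step _ st (ih (by omega) (by omega))
    rw [mu_trD] at r
    exact r

lemma runPassLast (u : List Sg) (hn : 1 ≤ u.length) :
    (sqT Sg).Run u ⟨1, [u.length], 1⟩ ⟨5, [], 0⟩ (S u u.length 1) := by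
  have r1 := runA u (p := u.length) (u.length - 1) 1 (by omega) (by omega)
  have st2 := stepAH u u.length
  rw [nextHead_neg_eq (by omega), if_pos rfl] at st2
  have r2 := PT.Run.single st2
  rw [mu_trAH] at r2
  have r3 := runB u (p := u.length) hn 0 u.length (by omega) (by omega)
  rw [nextHead_pos_eq (le_refl _), if_pos rfl] at r3
  have r4 := PT.Run.single (stepCH u)
  rw [mu_trCH] at r4
  have := r1.trans (r2.trans (r3.trans r4))
  simpa using this

lemma runPassStep (u : List Sg) {p : ℕ} (hp1 : 1 ≤ p) (hpn : p < u.length) :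
    (sqT Sg).Run u ⟨1, [p], 1⟩ ⟨1, [p + 1], 1⟩ (S u p 1) := by
  have r1 := runA u (p := p) (u.length - 1) 1 (by omega) (by omega)
  have st2 := stepAH u p
  rw [nextHead_neg_eq (by omega), if_pos rfl] at st2
  have r2 := PT.Run.single st2
  rw [mu_trAH] at r2
  have r3 := runB u (p := p) hp1 (u.length - p) u.length (le_refl _) (by omega)
  rw [nextHead_pos_eq (by omega), if_neg (by omega)] at r3
  have st4 := stepC u (h := p + 1) (by omega) (by omega)
  rw [nextHead_neg_eq (by omega), if_neg (by omega)] at st4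
  simp only [Nat.add_sub_cancel] at st4
  have r4 := PT.Run.single st4
  rw [mu_trC] at r4
  have r5 := runD u (p + 1) (by omega) p (by omega) (by omega)
  have := r1.trans (r2.trans (r3.trans (r4.trans r5)))
  simpa using this

lemma runInit (u : List Sg) (hn : 1 ≤ u.length) :
    (sqT Sg).Run u ⟨0, [], 0⟩ ⟨1, [1], 1⟩ [] := by
  have st1 := stepQI u
  rw [nextHead_pos_eq (by omega), if_neg (by omega)] at st1
  have r1 := PT.Run.single st1
  rw [mu_trQI] at r1
  have st2 := stepC u (h := 1) (by omega) (by omega)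
  rw [nextHead_neg_eq (by omega), if_neg (by omega)] at st2
  simp only [Nat.sub_self] at st2
  have r2 := PT.Run.single st2
  rw [mu_trC] at r2
  have r3 := runD u 1 hn 0 (by omega) (by omega)
  have := r1.trans (r2.trans r3)
  simpa using this

lemma runLoop (u : List Sg) (hn : 1 ≤ u.length) : ∀ d p, 1 ≤ p → u.length = p + d →
    (sqT Sg).Run u ⟨1, [p], 1⟩ ⟨5, [], 0⟩
      ((List.range (u.length + 1 - p)).flatMap (fun i => S u (p + i) 1)) := by
  intro d
  induction d with
  | zero =>
    intro p hp1 hd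
    obtain rfl : p = u.length := by omega
    rw [show u.length + 1 - u.length = 1 by omega]
    rw [show List.range 1 = [0] from rfl]
    simp only [List.flatMap_cons, List.flatMap_nil, List.append_nil, Nat.add_zero]
    exact runPassLast u hn
  | succ d ih =>
    intro p hp1 hd
    have hout : (List.range (u.length + 1 - p)).flatMap (fun i => S u (p + i) 1) =
        S u p 1 ++ (List.range (u.length + 1 - (p + 1))).flatMap (fun i => S u (p + 1 + i) 1) := by
      rw [show u.length + 1 - p = (u.length + 1 - (p + 1)) + 1 by omega,
        List.range_succ_eq_map, List.flatMap_cons, List.flatMap_map]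
      have hfun : (fun a : ℕ => S u (p + a.succ) 1) = fun i => S u (p + 1 + i) 1 := by
        funext i
        have he : p + i.succ = p + 1 + i := by omega
        rw [he]
      simp only [Function.comp_def, hfun, Nat.add_zero]
    rw [hout]
    exact (runPassStep u hp1 (by omega)).trans (ih (p + 1) (by omega) (by omega))

lemma runFull (u : List Sg) :
    (sqT Sg).Run u ⟨0, [], 0⟩ ⟨5, [], 0⟩ (squaringFun u) := by
  rcases Nat.eq_zero_or_pos u.length with h0 | hn
  · obtain rfl : u = [] := List.length_eq_zero_iff.mp h0
    have st1 := stepQI ([] : List Sg)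
    rw [nextHead_pos_eq (by simp), if_pos (by simp)] at st1
    have r1 := PT.Run.single st1
    rw [mu_trQI] at r1
    have r2 := PT.Run.single (stepCH ([] : List Sg))
    rw [mu_trCH] at r2
    have := r1.trans r2
    simpa [squaringFun] using this
  · have r := (runInit u hn).trans (runLoop u hn (u.length - 1) 1 (by omega) (by omega))
    rw [show u.length + 1 - 1 = u.length by omega] at r
    have hout : (List.range u.length).flatMap (fun i => S u (1 + i) 1) = squaringFun u := by
      unfold squaringFun
      congr 1
      funext i
      rw [show 1 + i = i + 1 by omega]
      exact S_one u i
    rw [hout] at r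
    simpa using r

/-! #### Uniqueness of accepting runs -/

lemma step_tgt_unique {Q Gm : Type} {T : PT Q Sg Gm 1} {u : List Sg}
    {t : PTrans Q Sg 1} {C C' C'' : Config Q}
    (s : T.StepT u t C C') (s' : T.StepT u t C C'') : C' = C'' := by
  obtain ⟨-, -, -, -, -, -, -, hq, hp, hh⟩ := s
  obtain ⟨-, -, -, -, -, -, -, hq', hp', hh'⟩ := s'
  cases C'; cases C''
  simp_all

lemma run_unique {Q Gm : Type} {T : PT Q Sg Gm 1} (hdet : T.Deterministic)
    (hfin : ∀ t ∈ T.δ, t.src ≠ T.qfin) {u : List Sg} {C C1 : Config Q} {v1 : List Gm}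
    (r1 : T.Run u C C1 v1) :
    C1.q = T.qfin → ∀ {C2 : Config Q} {v2 : List Gm},
      T.Run u C C2 v2 → C2.q = T.qfin → v1 = v2 := by
  induction r1 with
  | refl C =>
    intro h1 C2 v2 r2 h2
    cases r2 with
    | refl => rfl
    | step t s r => exact absurd (s.2.1.symm.trans h1) (hfin t s.1)
  | step t s r ih =>
    intro h1 C2 v2 r2 h2
    cases r2 with
    | refl => exact absurd (s.2.1.symm.trans h2) (hfin t s.1)
    | step t' s' r' =>
      obtain rfl : t = t' := hdet u t t' _ ⟨_, s⟩ ⟨_, s'⟩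
      obtain rfl := step_tgt_unique s s'
      rw [ih h1 r' h2]

end Squaring

/-- For every alphabet `Σ` there is a reversible basic `1`-pebble
transducer with 6 states computing the squaring function on `Σ*`. -/
theorem squaring_reversible (Sg : Type) [Fintype Sg] :
    ∃ (Q : Type) (instQ : Fintype Q) (T : PT Q Sg (Sg ⊕ Sg) 1),
      T.WF ∧ T.Basic ∧ T.Reversible ∧
      @Fintype.card Q instQ = 6 ∧
      T.Sem = {p : List Sg × List (Sg ⊕ Sg) | p.2 = squaringFun p.1} := by
  refine ⟨Fin 6, inferInstance, sqT Sg, sqT_wf, sqT_basic, ⟨sqT_det, sqT_revdet⟩, by simp, ?_⟩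
  ext ⟨u, v⟩
  simp only [PT.Sem, Set.mem_setOf_eq]
  constructor
  · intro h
    exact run_unique sqT_det (fun t ht => ((sqT_wf (Sg := Sg)).2.2.2.1 t ht).1) h rfl
      (runFull u) rfl
  · intro h
    rw [h]
    exact runFull u

end RevPeb
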